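/- arXiv:1807.04143 — 9 statements merged into one kernel-verified Lean document; each statement's English description precedes it below -/
import Mathlib

section
/- Let $M_1 \in (0,1)$, $\Gamma_1 > 0$, $\nu > 0$ and suppose $\frac{1}{1+\Gamma_1} < M_1^2 \nu < \frac{1+M_1}{\Gamma_1}$. Then the quadratic polynomial $Q(Y) = Y^2 + M_1^2 \Gamma_1 Y - M_1^2(1+\Gamma_1) + \frac{1-M_1^2}{\nu}$ has a unique root $y$ in the interval $(M_1^2, M_1)$. -/
theorem stmt0 (M₁ Γ₁ ν : ℝ) (hM : M₁ ∈ Set.Ioo (0:ℝ) 1) (hΓ : Γ₁ > 0) (hν : ν > 0)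
    (h1 : 1 / (1 + Γ₁) < M₁^2 * ν) (h2 : M₁^2 * ν < (1 + M₁) / Γ₁) :
    ∃! y : ℝ, y ∈ Set.Ioo (M₁^2) M₁ ∧
      y^2 + M₁^2 * Γ₁ * y - M₁^2 * (1 + Γ₁) + (1 - M₁^2) / ν = 0 := by
  obtain ⟨hM0, hM1⟩ := hM
  set f : ℝ → ℝ := fun y => y^2 + M₁^2 * Γ₁ * y - M₁^2 * (1 + Γ₁) + (1 - M₁^2) / ν with hf
  have hΓ1 : (0:ℝ) < 1 + Γ₁ := by linarith
  have hlt : M₁^2 < M₁ := by nlinarith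
  have h1' : 1 / ν < M₁^2 * (1 + Γ₁) := by
    rw [div_lt_iff₀ hν]
    rw [div_lt_iff₀ hΓ1] at h1
    nlinarith
  have h2' : M₁^2 * Γ₁ < (1 + M₁) / ν := by
    rw [lt_div_iff₀ hν]
    rw [lt_div_iff₀ hΓ] at h2
    nlinarith
  have hdiv : (1 - M₁^2) / ν = (1 - M₁^2) * (1 / ν) := by ring
  have hfa : f (M₁^2) < 0 := by
    simp only [hf]
    rw [hdiv]
    nlinarith [mul_lt_mul_of_pos_left h1' (by nlinarith : (0:ℝ) < 1 - M₁^2)]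
  have hfb : 0 < f M₁ := by
    simp only [hf]
    have : (1 - M₁^2) / ν = (1 - M₁) * ((1 + M₁) / ν) := by field_simp; ring
    rw [this]
    nlinarith [mul_lt_mul_of_pos_left h2' (by nlinarith : (0:ℝ) < 1 - M₁)]
  have hcont : ContinuousOn f (Set.Icc (M₁^2) M₁) := by
    apply Continuous.continuousOn; fun_prop
  have := intermediate_value_Ioo (le_of_lt hlt) hcont
  have hmem : (0:ℝ) ∈ Set.Ioo (f (M₁^2)) (f M₁) := ⟨hfa, hfb⟩
  obtain ⟨y, hy, hfy⟩ := this hmem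
  refine ⟨y, ⟨hy, hfy⟩, ?_⟩
  rintro z ⟨⟨hz1, hz2⟩, hfz⟩
  have hy1 := hy.1
  simp only [hf] at hfy
  have : (z - y) * (z + y + M₁^2 * Γ₁) = 0 := by linear_combination hfz - hfy
  have hpos : 0 < z + y + M₁^2 * Γ₁ := by nlinarith
  have := mul_eq_zero.mp this
  rcases this with h | h
  · linarith
  · linarith
end

section
/- Let $M_1 \in (0,1)$, $\Gamma_1 > 0$, $\nu > 0$ satisfy $\frac{1}{1+\Gamma_1} < M_1^2 \nu < \frac{1+M_1}{\Gamma_1}$. Define $Q(Y) = Y^2 + M_1^2 \Gamma_1 Y - M_1^2(1+\Gamma_1) + \frac{1-M_1^2}{\nu}$ and set $w = \frac{M_1^2 - 1 + \nu M_1^2(2+\Gamma_1)}{\nu(1 + M_1^2 + M_1^2\Gamma_1)}$. Then $Q(w) = \frac{(1-M_1^2)^2(1+\nu)}{\nu^2(1+M_1^2+M_1^2\Gamma_1)^2}\,(1 - \nu M_1^2(1+\Gamma_1))$, and in particular $Q(w) < 0$. -/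
theorem stmt1 (M₁ Γ₁ ν : ℝ) (hM : M₁ ∈ Set.Ioo (0:ℝ) 1) (hΓ : Γ₁ > 0) (hν : ν > 0)
    (h1 : 1 / (1 + Γ₁) < M₁^2 * ν) (h2 : M₁^2 * ν < (1 + M₁) / Γ₁)
    (Q : ℝ → ℝ)
    (hQ : ∀ Y, Q Y = Y^2 + M₁^2 * Γ₁ * Y - M₁^2 * (1 + Γ₁) + (1 - M₁^2) / ν)
    (w : ℝ)
    (hw : w = (M₁^2 - 1 + ν * M₁^2 * (2 + Γ₁)) / (ν * (1 + M₁^2 + M₁^2 * Γ₁))) :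
    Q w = (1 - M₁^2)^2 * (1 + ν) / (ν^2 * (1 + M₁^2 + M₁^2 * Γ₁)^2)
          * (1 - ν * M₁^2 * (1 + Γ₁)) ∧ Q w < 0 := by
  obtain ⟨hM0, hM1⟩ := hM
  have hden : ν * (1 + M₁^2 + M₁^2 * Γ₁) > 0 := by positivity
  have heq : Q w = (1 - M₁^2)^2 * (1 + ν) / (ν^2 * (1 + M₁^2 + M₁^2 * Γ₁)^2)
          * (1 - ν * M₁^2 * (1 + Γ₁)) := by
    rw [hQ, hw]
    have h1 : (ν : ℝ) ≠ 0 := ne_of_gt hν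
    have h2 : (1 + M₁^2 + M₁^2 * Γ₁ : ℝ) ≠ 0 := by positivity
    field_simp
    ring
  refine ⟨heq, ?_⟩
  rw [heq]
  have hΓ1 : (0:ℝ) < 1 + Γ₁ := by linarith
  have hgt : 1 < ν * M₁^2 * (1 + Γ₁) := by
    rw [div_lt_iff₀ hΓ1] at h1
    nlinarith
  have hpos : (0:ℝ) < (1 - M₁^2)^2 * (1 + ν) / (ν^2 * (1 + M₁^2 + M₁^2 * Γ₁)^2) := by
    have : (0:ℝ) < 1 - M₁^2 := by nlinarith
    positivity
  nlinarith
end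

section
/- Let $M_1 \in (0,1)$, $\Gamma_1 > 0$, $\nu > 0$ satisfy $\frac{1}{1+\Gamma_1} < M_1^2 \nu < \frac{1+M_1}{\Gamma_1}$, and let $y \in (M_1^2, M_1)$ be the root of $Q(Y) = Y^2 + M_1^2\Gamma_1 Y - M_1^2(1+\Gamma_1) + \frac{1-M_1^2}{\nu}$. Then $y > \frac{M_1^2 - 1 + \nu M_1^2(2+\Gamma_1)}{\nu(1+M_1^2+M_1^2\Gamma_1)}$. -/
theorem stmt2 (M₁ Γ₁ ν y : ℝ) (hM : M₁ ∈ Set.Ioo (0:ℝ) 1) (hΓ : Γ₁ > 0) (hν : ν > 0)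
    (h1 : 1 / (1 + Γ₁) < M₁^2 * ν) (h2 : M₁^2 * ν < (1 + M₁) / Γ₁)
    (hy : y ∈ Set.Ioo (M₁^2) M₁)
    (hroot : y^2 + M₁^2 * Γ₁ * y - M₁^2 * (1 + Γ₁) + (1 - M₁^2) / ν = 0) :
    y > (M₁^2 - 1 + ν * M₁^2 * (2 + Γ₁)) / (ν * (1 + M₁^2 + M₁^2 * Γ₁)) := by
  obtain ⟨hM0, hM1⟩ := hM
  obtain ⟨hy1, hy2⟩ := hy
  have hΓ1 : (0:ℝ) < 1 + Γ₁ := by linarith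
  have hM2 : M₁^2 < 1 := by nlinarith
  have hy0 : 0 < y := lt_trans (by positivity) hy1
  have hA : M₁^2 * ν * (1 + Γ₁) - 1 > 0 := by
    rw [div_lt_iff₀ hΓ1] at h1; linarith
  have hD : ν * (1 + M₁^2 + M₁^2 * Γ₁) > 0 := by positivity
  have key : ν * y^2 + ν * (M₁^2 * Γ₁) * y + (1 - M₁^2) = ν * (M₁^2 * (1 + Γ₁)) := by
    have := hroot
    field_simp at this
    nlinarith [this]
  rw [gt_iff_lt, div_lt_iff₀ hD]
  by_contra h
  push_neg at h
  have hyD : 0 < y * (ν * (1 + M₁^2 + M₁^2 * Γ₁)) := mul_pos hy0 hD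
  have hN : 0 < M₁^2 - 1 + ν * M₁^2 * (2 + Γ₁) := lt_of_lt_of_le hyD h
  have hΓD : 0 ≤ M₁^2 * Γ₁ * (ν * (1 + M₁^2 + M₁^2 * Γ₁)) := by positivity
  have hP : 0 ≤ (M₁^2 - 1 + ν * M₁^2 * (2 + Γ₁) - y * (ν * (1 + M₁^2 + M₁^2 * Γ₁))) *
      (M₁^2 - 1 + ν * M₁^2 * (2 + Γ₁) + y * (ν * (1 + M₁^2 + M₁^2 * Γ₁)) +
        M₁^2 * Γ₁ * (ν * (1 + M₁^2 + M₁^2 * Γ₁))) := by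
    apply mul_nonneg (by linarith) (by linarith)
  have hsq : (0:ℝ) < (1 - M₁^2)^2 := pow_pos (by linarith) 2
  have h1ν : (0:ℝ) < 1 + ν := by linarith
  have pos : 0 < ν * (1 + ν) * (1 - M₁^2)^2 * (M₁^2 * ν * (1 + Γ₁) - 1) := by positivity
  have hz : ν * ((M₁^2 - 1 + ν * M₁^2 * (2 + Γ₁) - y * (ν * (1 + M₁^2 + M₁^2 * Γ₁))) *
      (M₁^2 - 1 + ν * M₁^2 * (2 + Γ₁) + y * (ν * (1 + M₁^2 + M₁^2 * Γ₁)) +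
        M₁^2 * Γ₁ * (ν * (1 + M₁^2 + M₁^2 * Γ₁))))
      = -(ν * (1 + ν) * (1 - M₁^2)^2 * (M₁^2 * ν * (1 + Γ₁) - 1)) := by
    linear_combination (-(ν * (1 + M₁^2 + M₁^2 * Γ₁))^2) * key
  linarith [mul_nonneg hν.le hP, pos, hz]
end

section
/- Let $M_1 \in (0,1)$, $\Gamma_1 > 0$, $\nu > 0$, and let $y$ be any root of $Q(Y) = Y^2 + M_1^2\Gamma_1 Y - M_1^2(1+\Gamma_1) + \frac{1-M_1^2}{\nu}$. Then the following exact polynomial identity holds: $\big((1-\nu M_1^2\Gamma_1)^2 - M_1^2\big)(1-y)^4 + (1-M_1^2)(1+\nu)^2(M_1^2-y^2)^2 + (M_1^2-y^2)(1-y)^2\big((1-\nu M_1^2\Gamma_1)^2 + 1 - 2M_1^2 - 2\nu(1+M_1^2-\nu M_1^2\Gamma_1)\big) = 0$. -/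
theorem stmt3 (M₁ Γ₁ ν y : ℝ) (hM : M₁ ∈ Set.Ioo (0:ℝ) 1) (hΓ : Γ₁ > 0) (hν : ν > 0)
    (hroot : y^2 + M₁^2 * Γ₁ * y - M₁^2 * (1 + Γ₁) + (1 - M₁^2) / ν = 0) :
    ((1 - ν * M₁^2 * Γ₁)^2 - M₁^2) * (1 - y)^4
      + (1 - M₁^2) * (1 + ν)^2 * (M₁^2 - y^2)^2
      + (M₁^2 - y^2) * (1 - y)^2 *
        ((1 - ν * M₁^2 * Γ₁)^2 + 1 - 2 * M₁^2 - 2 * ν * (1 + M₁^2 - ν * M₁^2 * Γ₁)) = 0 := by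
  have hν' : ν ≠ 0 := ne_of_gt hν
  have h : ν * (y^2 + M₁^2 * Γ₁ * y - M₁^2 * (1 + Γ₁)) + (1 - M₁^2) = 0 := by
    have := hroot
    field_simp at this
    linarith
  linear_combination ((4 + ν * (1 - M₁^2 - 2 * M₁^2 * Γ₁)) * y^2
      + (-4 * (1 + M₁^2) + ν * M₁^2 * Γ₁ * (3 + M₁^2)) * y
      + ((1 + M₁^2)^2 - ν * M₁^2 * (1 - M₁^2) - ν * M₁^2 * Γ₁ * (1 + M₁^2))) * h
end

section
/- Let $M_1 \in (0,1)$, $\Gamma_1 > 0$, $\nu > 0$ with $\frac{1}{1+\Gamma_1} < M_1^2\nu$, and let $\Phi \in (M_1,1)$ satisfy $\Phi^2 + M_1\Gamma_1\Phi - 1 - \Gamma_1 + \frac{1-M_1^2}{\nu M_1^2} = 0$. Define $c_\star^2 = c_1^2 \frac{(1-M_1\Phi)^2}{1-\Phi^2}$ for $c_1 > 0$, and set $v_1 = -M_1 c_1$. Then $c_\star^2 > c_1^2 - v_1^2$. -/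
theorem stmt4 (M₁ Γ₁ ν Φ c₁ : ℝ) (hM : M₁ ∈ Set.Ioo (0:ℝ) 1) (hΓ : Γ₁ > 0) (hν : ν > 0)
    (h1 : 1 / (1 + Γ₁) < M₁^2 * ν)
    (hΦ : Φ ∈ Set.Ioo M₁ 1)
    (hΦeq : Φ^2 + M₁ * Γ₁ * Φ - 1 - Γ₁ + (1 - M₁^2) / (ν * M₁^2) = 0)
    (hc₁ : c₁ > 0) (cstarsq v₁ : ℝ)
    (hcstar : cstarsq = c₁^2 * (1 - M₁ * Φ)^2 / (1 - Φ^2))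
    (hv₁ : v₁ = -M₁ * c₁) :
    cstarsq > c₁^2 - v₁^2 := by
  obtain ⟨hM0, hM1⟩ := hM
  obtain ⟨hΦM, hΦ1⟩ := hΦ
  have h2 : (1:ℝ) - Φ^2 > 0 := by nlinarith
  have key : cstarsq * (1 - Φ^2) = c₁^2 * (1 - M₁*Φ)^2 := by
    rw [hcstar]; field_simp
  have h3 : Φ - M₁ > 0 := by linarith
  have hd : (Φ - M₁)^2 > 0 := by positivity
  rw [hv₁]
  nlinarith [mul_pos (mul_pos hc₁ hc₁) hd]
end

section
/- Let $M_1 \in (0,1)$, $\nu > 0$, $\beta \in (-1, M_1)$. Then the quantity $D := \frac{1+M_1^2-2M_1\beta}{(M_1-\beta)(1-M_1\beta)} + \nu M_1 \cdot \frac{M_1(3+M_1^2)\beta^2 - 2(1+3M_1^2)\beta + M_1(3+M_1^2)}{(M_1-\beta)(1-M_1\beta)(1+M_1^2-2M_1\beta)}$ is strictly positive. -/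
theorem stmt10 (M₁ ν β : ℝ) (hM : M₁ ∈ Set.Ioo (0:ℝ) 1) (hν : ν > 0)
    (hβ : β ∈ Set.Ioo (-1 : ℝ) M₁) :
    0 < (1 + M₁^2 - 2 * M₁ * β) / ((M₁ - β) * (1 - M₁ * β))
        + ν * M₁ * ((M₁ * (3 + M₁^2) * β^2 - 2 * (1 + 3 * M₁^2) * β + M₁ * (3 + M₁^2))
            / ((M₁ - β) * (1 - M₁ * β) * (1 + M₁^2 - 2 * M₁ * β))) := by
  obtain ⟨hM0, hM1⟩ := hM
  obtain ⟨hβ1, hβM⟩ := hβ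
  have h1 : 0 < M₁ - β := by linarith
  have h2 : 0 < 1 - M₁ * β := by nlinarith
  have h3 : 0 < 1 + M₁^2 - 2 * M₁ * β := by nlinarith
  have hQ : 0 < M₁ * (3 + M₁^2) * β^2 - 2 * (1 + 3 * M₁^2) * β + M₁ * (3 + M₁^2) := by
    nlinarith [mul_pos h1 h2, sq_nonneg (M₁ - β), sq_nonneg (1 - M₁ * β), sq_nonneg (M₁ + β),
      sq_nonneg (1 + β), mul_pos (mul_pos h1 h1) h2, mul_pos (mul_pos h1 h2) h2,
      sq_nonneg β, mul_pos hM0 h1]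
  have : 0 < (1 + M₁^2 - 2 * M₁ * β) / ((M₁ - β) * (1 - M₁ * β)) :=
    div_pos h3 (mul_pos h1 h2)
  have : 0 < ν * M₁ * ((M₁ * (3 + M₁^2) * β^2 - 2 * (1 + 3 * M₁^2) * β + M₁ * (3 + M₁^2))
      / ((M₁ - β) * (1 - M₁ * β) * (1 + M₁^2 - 2 * M₁ * β))) :=
    mul_pos (mul_pos hν hM0) (div_pos hQ (mul_pos (mul_pos h1 h2) h3))
  linarith
end

section
/- Let $c_1 > 0$, $v_1 \in (-c_1,0)$, $\overline u < 0$ with $\overline u^2 + v_1^2 > c_1^2$. Define $\omega_- = \frac{v_1\overline u - c_1\sqrt{\overline u^2+v_1^2-c_1^2}}{c_1^2 - v_1^2}$, and define $\cos\Psi_0 = \frac{-c_1 v_1 + \overline u\sqrt{\overline u^2+v_1^2-c_1^2}}{\overline u^2 + v_1^2}$, $\sin\Psi_0 = \frac{c_1\overline u + v_1\sqrt{\overline u^2+v_1^2-c_1^2}}{\overline u^2+v_1^2}$. Then $\sin\Psi_0 = \frac{c_1}{\overline u + v_1\omega_-}$ and $\cos\Psi_0 = -\frac{c_1\,\omega_-}{\overline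 u + v_1\omega_-}$. -/
/-! Write `r = √(u² + v² - c²)`. Since `u + v ω₋ = c (c u - v r) / (c² - v²)`, both identities
become polynomial consequences of `r² = u² + v² - c²` once the denominator `c u - v r` is known to be
nonzero, and that follows from the conjugate product `(c u + v r)(c u - v r) = (c² - v²)(u² + v²)`,
nonzero when `v² < c² < u² + v²`. -/

namespace SteadyShock

variable {K : Type*} [Field K] {c v u r : K}

/-- `ω₋`, with the square root `√(u² + v² - c²)` abstracted to any `r` with `r² = u² + v² - c²`. -/
def omegaMinus (c v u r : K) : K := (v * u - c * r) / (c ^ 2 - v ^ 2)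

theorem conj_mul_eq (hr : r ^ 2 = u ^ 2 + v ^ 2 - c ^ 2) :
    (c * u + v * r) * (c * u - v * r) = (c ^ 2 - v ^ 2) * (u ^ 2 + v ^ 2) := by
  linear_combination (-v ^ 2) * hr

theorem mul_sub_mul_ne_zero (hr : r ^ 2 = u ^ 2 + v ^ 2 - c ^ 2) (hcv : c ^ 2 - v ^ 2 ≠ 0)
    (hD : u ^ 2 + v ^ 2 ≠ 0) : c * u - v * r ≠ 0 := by
  intro h
  have hprod := conj_mul_eq hr
  rw [h, mul_zero] at hprod
  exact mul_ne_zero hcv hD hprod.symm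

theorem add_mul_omegaMinus (hcv : c ^ 2 - v ^ 2 ≠ 0) :
    u + v * omegaMinus c v u r = c * (c * u - v * r) / (c ^ 2 - v ^ 2) := by
  unfold omegaMinus
  field_simp
  ring

theorem sin_eq (hr : r ^ 2 = u ^ 2 + v ^ 2 - c ^ 2) (hc : c ≠ 0) (hcv : c ^ 2 - v ^ 2 ≠ 0)
    (hD : u ^ 2 + v ^ 2 ≠ 0) : (c * u + v * r) / (u ^ 2 + v ^ 2) = c / (u + v * omegaMinus c v u r) := by
  have hden := mul_sub_mul_ne_zero hr hcv hD
  rw [add_mul_omegaMinus hcv, div_eq_div_iff hD (div_ne_zero (mul_ne_zero hc hden) hcv)]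
  field_simp
  linear_combination conj_mul_eq hr

theorem cos_eq (hr : r ^ 2 = u ^ 2 + v ^ 2 - c ^ 2) (hc : c ≠ 0) (hcv : c ^ 2 - v ^ 2 ≠ 0)
    (hD : u ^ 2 + v ^ 2 ≠ 0) : (-c * v + u * r) / (u ^ 2 + v ^ 2) =
    -(c * omegaMinus c v u r / (u + v * omegaMinus c v u r)) := by
  have hden := mul_sub_mul_ne_zero hr hcv hD
  rw [add_mul_omegaMinus hcv]
  unfold omegaMinus
  field_simp
  linear_combination (-v * u) * hr

end SteadyShock

open SteadyShock in
theorem stmt13_general (c₁ v₁ u : ℝ) (hv : v₁ ∈ Set.Ioo (-c₁) 0)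
    (hhyp : u^2 + v₁^2 > c₁^2)
    (ω C S : ℝ)
    (hω : ω = (v₁ * u - c₁ * Real.sqrt (u^2 + v₁^2 - c₁^2)) / (c₁^2 - v₁^2))
    (hC : C = (-c₁ * v₁ + u * Real.sqrt (u^2 + v₁^2 - c₁^2)) / (u^2 + v₁^2))
    (hS : S = (c₁ * u + v₁ * Real.sqrt (u^2 + v₁^2 - c₁^2)) / (u^2 + v₁^2)) :
    S = c₁ / (u + v₁ * ω) ∧ C = -(c₁ * ω / (u + v₁ * ω)) := by
  obtain ⟨hv₁, hv₂⟩ := hv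
  have hr : Real.sqrt (u^2 + v₁^2 - c₁^2) ^ 2 = u^2 + v₁^2 - c₁^2 := Real.sq_sqrt (by linarith)
  have hcv : 0 < c₁^2 - v₁^2 := by nlinarith
  have hc : c₁ ≠ 0 := by linarith
  have hD : u^2 + v₁^2 ≠ 0 := by nlinarith
  subst hω hC hS
  exact ⟨sin_eq hr hc hcv.ne' hD, cos_eq hr hc hcv.ne' hD⟩

theorem stmt13 (c₁ v₁ u : ℝ) (hc : 0 < c₁) (hv : v₁ ∈ Set.Ioo (-c₁) 0) (hu : u < 0)
    (hhyp : u^2 + v₁^2 > c₁^2)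
    (ω C S : ℝ)
    (hω : ω = (v₁ * u - c₁ * Real.sqrt (u^2 + v₁^2 - c₁^2)) / (c₁^2 - v₁^2))
    (hC : C = (-c₁ * v₁ + u * Real.sqrt (u^2 + v₁^2 - c₁^2)) / (u^2 + v₁^2))
    (hS : S = (c₁ * u + v₁ * Real.sqrt (u^2 + v₁^2 - c₁^2)) / (u^2 + v₁^2)) :
    S = c₁ / (u + v₁ * ω) ∧ C = -(c₁ * ω / (u + v₁ * ω)) :=
  stmt13_general c₁ v₁ u hv hhyp ω C S hω hC hS
end

section
/- Let $M_1 \in (0,1)$, $\Gamma_1 > 0$, $\nu > 0$ satisfy $\frac{1}{1+\Gamma_1} < M_1^2\nu < \frac{1+M_1}{\Gamma_1}$, let $y \in (M_1^2, M_1)$ be the root of $Q(Y) = Y^2 + M_1^2\Gamma_1 Y - M_1^2(1+\Gamma_1) + \frac{1-M_1^2}{\nu}$, and suppose $y$ satisfies $y > \frac{M_1^2-1+\nu M_1^2(2+\Gamma_1)}{\nu(1+M_1^2+M_1^2\Gamma_1)}$. Then $(1+M_1^2 - M_1^2\Gamma_1\nu)(1-y)^2 - (1-M_1^2)(1+\nu)(M_1^2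 - y^2) < 0$. -/
theorem stmt17 (M₁ Γ₁ ν y : ℝ) (hM : M₁ ∈ Set.Ioo (0:ℝ) 1) (hΓ : Γ₁ > 0) (hν : ν > 0)
    (h1 : 1 / (1 + Γ₁) < M₁^2 * ν) (h2 : M₁^2 * ν < (1 + M₁) / Γ₁)
    (hy : y ∈ Set.Ioo (M₁^2) M₁)
    (hroot : y^2 + M₁^2 * Γ₁ * y - M₁^2 * (1 + Γ₁) + (1 - M₁^2) / ν = 0)
    (hineq : y > (M₁^2 - 1 + ν * M₁^2 * (2 + Γ₁)) / (ν * (1 + M₁^2 + M₁^2 * Γ₁))) :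
    (1 + M₁^2 - M₁^2 * Γ₁ * ν) * (1 - y)^2
      - (1 - M₁^2) * (1 + ν) * (M₁^2 - y^2) < 0 := by
  obtain ⟨hM0, hM1⟩ := hM
  obtain ⟨hy1, hy2⟩ := hy
  have hν' : ν ≠ 0 := ne_of_gt hν
  have hR : ν * (y^2 + M₁^2 * Γ₁ * y - M₁^2 * (1 + Γ₁)) + (1 - M₁^2) = 0 := by
    field_simp at hroot
    linarith
  have hE : (1 + M₁^2 - M₁^2 * Γ₁ * ν) * (1 - y)^2
      - (1 - M₁^2) * (1 + ν) * (M₁^2 - y^2)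
      = (1 - y) * (ν * (y^2 + M₁^2 * Γ₁ * y - M₁^2 * (1 + Γ₁)) + (1 - M₁^2))
        + (M₁^2 - y) * (ν * (M₁^2 - y^2) + 1 + M₁^2 - 2*y) := by ring
  rw [hE, hR, mul_zero, zero_add]
  apply mul_neg_of_neg_of_pos
  · linarith
  · nlinarith [sq_nonneg (1 - M₁), mul_pos hν (sub_pos.mpr (show y^2 < M₁^2 by nlinarith))]
end

section
/- Let $\tau_1, c_1, T_1, \Gamma_1 > 0$, $v_1 \in (-c_1, 0)$, $\overline u \in \mathbb{R}$ with $\overline u^2 + v_1^2 > c_1^2$, and let $\omega_-$ be a real root of $(\overline u + v_1\omega)^2 = c_1^2(1+\omega^2)$ with $\overline u + v_1\omega_- \neq 0$. Then the three vectors $(0, \overline u, v_1, 0)$, $(\Gamma_1 T_1 \tau_1, 0, 0, c_1^2)$, and $(\tau_1(\overline u + v_1\omega_-), c_1^2, c_1^2\omega_-, 0)$ in $\mathbb{R}^4$ are linearly independent. -/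
theorem stmt18 (τ₁ c₁ T₁ Γ₁ v₁ u ω : ℝ)
    (hτ : τ₁ > 0) (hc : c₁ > 0) (hT : T₁ > 0) (hΓ : Γ₁ > 0)
    (hv : v₁ ∈ Set.Ioo (-c₁) 0)
    (hhyp : u^2 + v₁^2 > c₁^2)
    (hω : (u + v₁ * ω)^2 = c₁^2 * (1 + ω^2))
    (hne : u + v₁ * ω ≠ 0) :
    LinearIndependent ℝ
      ![![0, u, v₁, 0],
        ![Γ₁ * T₁ * τ₁, 0, 0, c₁^2],
        ![τ₁ * (u + v₁ * ω), c₁^2, c₁^2 * ω, 0]] := by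
  rw [Fintype.linearIndependent_iff]
  intro g hg
  have h1 := congrFun hg 1
  have h2 := congrFun hg 2
  have h3 := congrFun hg 3
  simp [Fin.sum_univ_three] at h1 h2 h3
  have hc2 : c₁ ^ 2 ≠ 0 := by positivity
  have hb : g 1 = 0 := by
    rcases h3 with h | h
    · exact h
    · exact absurd h hc.ne'
  have hvu : v₁ - u * ω ≠ 0 := by
    intro h
    have hveq : v₁ = u * ω := by linarith
    subst hveq
    nlinarith [hω, hhyp, sq_nonneg ω,
      mul_lt_mul_of_pos_right hhyp (by positivity : (0:ℝ) < 1 + ω^2)]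
  have hcz : g 2 = 0 := by
    have key : g 2 * (c₁ ^ 2 * (v₁ - u * ω)) = 0 := by linear_combination v₁ * h1 - u * h2
    rcases mul_eq_zero.mp key with h | h
    · exact h
    · exact absurd h (mul_ne_zero hc2 hvu)
  have ha : g 0 = 0 := by
    have key : g 0 * v₁ = 0 := by linear_combination h2 - (c₁ ^ 2 * ω) * hcz
    rcases mul_eq_zero.mp key with h | h
    · exact h
    · exact absurd h hv.2.ne
  intro i
  fin_cases i <;> assumption
end
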